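/- arXiv:2007.11895 — 5 statements merged into one kernel-verified Lean document; each statement's English description precedes it below -/
import Mathlib

section
/- Let A, B, C, D be four points in ℝ² with dist(A,B) = 1, dist(C,D) = 1, and dist(A,C) > 1, dist(A,D) > 1, dist(B,C) > 1, dist(B,D) > 1. Then the closed segments [A,B] and [C,D] are disjoint. -/
theorem dist_add_dist_le_of_mem_segment_inter {E : Type*} [SeminormedAddCommGroup E]
    [NormedSpace ℝ E] {A B C D P : E} (hAB : P ∈ segment ℝ A B) (hCD : P ∈ segment ℝ C D) :
    dist A C + dist B D ≤ dist A B + dist C D := by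
  rw [← dist_add_dist_of_mem_segment hAB, ← dist_add_dist_of_mem_segment hCD]
  calc dist A C + dist B D ≤ (dist A P + dist P C) + (dist B P + dist P D) :=
        add_le_add (dist_triangle A P C) (dist_triangle B P D)
    _ = dist A P + dist P B + (dist C P + dist P D) := by
        rw [dist_comm P C, dist_comm B P]; ring

theorem segments_disjoint_general (A B C D : EuclideanSpace ℝ (Fin 2))
    (hAB : dist A B = 1) (hCD : dist C D = 1)
    (hAC : 1 < dist A C) (hBD : 1 < dist B D) :
    Disjoint (segment ℝ A B) (segment ℝ C D) := by
  rw [Set.disjoint_left]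
  intro P hP hP'
  have hsum := dist_add_dist_le_of_mem_segment_inter hP hP'
  linarith

theorem segments_disjoint (A B C D : EuclideanSpace ℝ (Fin 2))
    (hAB : dist A B = 1) (hCD : dist C D = 1)
    (hAC : 1 < dist A C) (hAD : 1 < dist A D)
    (hBC : 1 < dist B C) (hBD : 1 < dist B D) :
    Disjoint (segment ℝ A B) (segment ℝ C D) :=
  segments_disjoint_general A B C D hAB hCD hAC hBD
end

section
/- Let A, B, C be three points in ℝ² with dist(A,B) = 1, dist(A,C) > 1, and dist(B,C) > 1. Then for every point x on the closed segment [A,B], dist(x,C) ≥ √3/2. -/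
/-!
Write `x = s • A + t • B` with `s + t = 1`, `s, t ≥ 0`. The identity
`|x - C|² = s |A - C|² + t |B - C|² - s t |A - B|²` gives `|x - C|² ≥ 1 - s t`,
and `s t ≤ (s + t)² / 4 = 1 / 4`.
-/

section InnerProductSpace

variable {E : Type*} [NormedAddCommGroup E] [InnerProductSpace ℝ E]

theorem norm_smul_add_smul_sq_of_add_eq_one {s t : ℝ} (h : s + t = 1) (u v : E) :
    ‖s • u + t • v‖ ^ 2 = s * ‖u‖ ^ 2 + t * ‖v‖ ^ 2 - s * t * ‖u - v‖ ^ 2 := by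
  obtain rfl : t = 1 - s := by linarith
  rw [norm_add_sq_real, norm_sub_sq_real, norm_smul, norm_smul, real_inner_smul_left,
    real_inner_smul_right, mul_pow, mul_pow, Real.norm_eq_abs, Real.norm_eq_abs, sq_abs, sq_abs]
  ring

theorem dist_smul_add_smul_sq_of_add_eq_one {s t : ℝ} (h : s + t = 1) (A B C : E) :
    dist (s • A + t • B) C ^ 2 =
      s * dist A C ^ 2 + t * dist B C ^ 2 - s * t * dist A B ^ 2 := by
  have hsub : s • A + t • B - C = s • (A - C) + t • (B - C) := by
    obtain rfl : t = 1 - s := by linarith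
    module
  rw [dist_eq_norm, hsub, norm_smul_add_smul_sq_of_add_eq_one h, sub_sub_sub_cancel_right,
    dist_eq_norm, dist_eq_norm, dist_eq_norm]

theorem mul_sqrt_three_div_two_le_dist_of_mem_segment {A B C x : E} {r : ℝ}
    (hAB : dist A B ≤ r) (hAC : r ≤ dist A C) (hBC : r ≤ dist B C)
    (hx : x ∈ segment ℝ A B) : Real.sqrt 3 / 2 * r ≤ dist x C := by
  obtain ⟨s, t, hs, ht, hst, rfl⟩ := hx
  have hst_le : s * t ≤ 1 / 4 := by nlinarith [four_mul_le_sq_add s t]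
  have hr : 0 ≤ r := dist_nonneg.trans hAB
  have hsq : (Real.sqrt 3 / 2 * r) ^ 2 ≤ dist (s • A + t • B) C ^ 2 :=
    calc (Real.sqrt 3 / 2 * r) ^ 2 = (1 - 1 / 4) * r ^ 2 := by
          rw [mul_pow, div_pow, Real.sq_sqrt zero_le_three]; ring
      _ ≤ (1 - s * t) * r ^ 2 := by gcongr
      _ = s * r ^ 2 + t * r ^ 2 - s * t * r ^ 2 := by rw [← hst]; ring
      _ ≤ s * dist A C ^ 2 + t * dist B C ^ 2 - s * t * dist A B ^ 2 := by gcongr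
      _ = dist (s • A + t • B) C ^ 2 := (dist_smul_add_smul_sq_of_add_eq_one hst A B C).symm
  exact le_of_sq_le_sq hsq dist_nonneg

end InnerProductSpace

theorem dist_segment_point_ge (A B C : EuclideanSpace ℝ (Fin 2))
    (hAB : dist A B = 1) (hAC : 1 < dist A C) (hBC : 1 < dist B C) :
    ∀ x ∈ segment ℝ A B, Real.sqrt 3 / 2 ≤ dist x C := fun x hx => by
  simpa using mul_sqrt_three_div_two_le_dist_of_mem_segment hAB.le hAC.le hBC.le hx
end

section
/- Let A, B, C, D be four points in ℝ² with dist(A,B) = 1, dist(C,D) = 1, and dist(A,C) > 1, dist(A,D) > 1, dist(B,C) > 1, dist(B,D) > 1. Then for every x on the segment [A,B] and every y on the segment [C,D], dist(x,y) ≥ √3/2. -/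
set_option maxHeartbeats 1000000

private lemma no_cross (P : ℝ) (h1 : 3/4 ≤ P^2) (h2 : 3/4 ≤ (P-1)^2)
    (h3 : 0 ≤ P) (h4 : P ≤ 1) : False := by
  linarith [mul_nonneg h3 (sub_nonneg.2 h4)]

private lemma between_sq (q b r1 r2 t : ℝ) (h1 : r1 ≤ t) (h2 : t ≤ r2)
    (hp1 : 0 < q + r1*b) (hp2 : 0 < q + r2*b)
    (hQ1 : 3/4 ≤ (q + r1*b)^2) (hQ2 : 3/4 ≤ (q + r2*b)^2) :
    3/4 ≤ (q + t*b)^2 := by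
  rcases eq_or_lt_of_le (h1.trans h2) with he | hlt
  · have ht' : t = r1 := le_antisymm (he ▸ h2) h1
    rw [ht']; exact hQ1
  · have hprod : 3/4 ≤ (q+r1*b)*(q+r2*b) := by nlinarith [mul_pos hp1 hp2]
    have hident : ((r2 - r1)*(q + t*b))^2
        = ((r2 - t)*(q+r1*b) + (t - r1)*(q+r2*b))^2 := by ring
    nlinarith [hident, hQ1, hQ2, hprod,
      mul_nonneg (sub_nonneg.2 h2) (sub_nonneg.2 h1),
      sq_nonneg (r2-t), sq_nonneg (t-r1), mul_pos (sub_pos.2 hlt) (sub_pos.2 hlt)]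

private lemma key (p q a b s t : ℝ) (hab : a^2+b^2 = 1)
    (h1 : 1 < p^2+q^2) (h2 : 1 < (p+a)^2+(q+b)^2)
    (h3 : 1 < (p-1)^2+q^2) (h4 : 1 < (p+a-1)^2+(q+b)^2)
    (hs0 : 0 ≤ s) (hs1 : s ≤ 1) (ht0 : 0 ≤ t) (ht1 : t ≤ 1) :
    3/4 ≤ (p + t*a - s)^2 + (q + t*b)^2 := by
  have hA : ∀ r : ℝ, 0 ≤ r → r ≤ 1 → 3/4 ≤ (p + r*a)^2 + (q + r*b)^2 := by
    intro r hr0 hr1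
    have e : (p + r*a)^2 + (q + r*b)^2
        = (1-r)*(p^2+q^2) + r*((p+a)^2+(q+b)^2) - (r*(1-r))*(a^2+b^2) := by ring
    rw [hab, mul_one] at e
    linarith [mul_nonneg (sub_nonneg.2 hr1) (show (0:ℝ) ≤ p^2+q^2 - 1 by linarith),
      mul_nonneg hr0 (show (0:ℝ) ≤ (p+a)^2+(q+b)^2 - 1 by linarith),
      sq_nonneg (2*r-1)]
  have hB : ∀ r : ℝ, 0 ≤ r → r ≤ 1 → 3/4 ≤ (p + r*a - 1)^2 + (q + r*b)^2 := by
    intro r hr0 hr1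
    have e : (p + r*a - 1)^2 + (q + r*b)^2
        = (1-r)*((p-1)^2+q^2) + r*((p+a-1)^2+(q+b)^2) - (r*(1-r))*(a^2+b^2) := by ring
    rw [hab, mul_one] at e
    linarith [mul_nonneg (sub_nonneg.2 hr1) (show (0:ℝ) ≤ (p-1)^2+q^2 - 1 by linarith),
      mul_nonneg hr0 (show (0:ℝ) ≤ (p+a-1)^2+(q+b)^2 - 1 by linarith),
      sq_nonneg (2*r-1)]
  rcases le_or_gt (p + t*a) 0 with hc1 | hc1
  · linarith [hA t ht0 ht1, mul_nonneg hs0 (neg_nonneg.2 hc1), sq_nonneg s]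
  rcases le_or_gt 1 (p + t*a) with hc2 | hc2
  · linarith [hB t ht0 ht1,
      mul_nonneg (sub_nonneg.2 hs1) (show (0:ℝ) ≤ 2*(p+t*a) - 1 - s by linarith)]
  -- main case : 0 < p + t*a < 1
  have hex1 : ∃ r, 0 ≤ r ∧ r ≤ t ∧ 0 ≤ p + r*a ∧ p + r*a ≤ 1 ∧ 3/4 ≤ (q + r*b)^2 := by
    rcases lt_or_ge p 0 with hp | hp
    · -- p < 0 : crossing with P = 0, need a > 0
      have ha : 0 < a := by
        by_contra h; push_neg at h
        linarith [mul_nonneg ht0 (neg_nonneg.2 h)]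
      have hane : a ≠ 0 := ne_of_gt ha
      have hval : p + ((-p)/a)*a = 0 := by field_simp; ring
      refine ⟨(-p)/a, ?_, ?_, ?_, ?_, ?_⟩
      · exact div_nonneg (by linarith) ha.le
      · rw [div_le_iff₀ ha]; linarith
      · rw [hval]
      · rw [hval]; norm_num
      · have hr0 : 0 ≤ (-p)/a := div_nonneg (by linarith) ha.le
        have hrt : (-p)/a ≤ t := by rw [div_le_iff₀ ha]; linarith
        have := hA ((-p)/a) hr0 (hrt.trans ht1)
        have hval2 : (p + ((-p)/a)*a)^2 = 0 := by rw [hval]; norm_num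
        linarith
    rcases le_or_gt p 1 with hp1 | hp1
    · -- 0 ≤ p ≤ 1 : take r = 0
      refine ⟨0, le_refl 0, ht0, by simpa using hp, by simpa using hp1, ?_⟩
      have : (q + 0*b)^2 = q^2 := by ring
      rw [this]
      rcases le_or_gt p (1/2) with h | h
      · linarith [mul_nonneg (show (0:ℝ) ≤ 1/2 - p by linarith) (show (0:ℝ) ≤ 1/2 + p by linarith)]
      · linarith [mul_nonneg (show (0:ℝ) ≤ p - 1/2 by linarith) (show (0:ℝ) ≤ 3/2 - p by linarith)]
    · -- p > 1 : crossing with P = 1, need a < 0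
      have ha : a < 0 := by
        by_contra h; push_neg at h
        linarith [mul_nonneg ht0 h]
      have hane : a ≠ 0 := ne_of_lt ha
      have hval : p + ((1-p)/a)*a = 1 := by field_simp; ring
      have hr0 : 0 ≤ (1-p)/a := by
        rw [le_div_iff_of_neg ha]; simp; nlinarith []
      have hrt : (1-p)/a ≤ t := by rw [div_le_iff_of_neg ha]; linarith
      refine ⟨(1-p)/a, hr0, hrt, ?_, ?_, ?_⟩
      · rw [hval]; norm_num
      · rw [hval]
      · have := hB ((1-p)/a) hr0 (hrt.trans ht1)
        have hval2 : (p + ((1-p)/a)*a - 1)^2 = 0 := by rw [hval]; norm_num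
        linarith
  have hex2 : ∃ r, t ≤ r ∧ r ≤ 1 ∧ 0 ≤ p + r*a ∧ p + r*a ≤ 1 ∧ 3/4 ≤ (q + r*b)^2 := by
    rcases lt_or_ge (p+a) 0 with hp | hp
    · -- p + a < 0 : crossing with P = 0, need a < 0
      have ha : a < 0 := by
        by_contra h; push_neg at h
        linarith [mul_nonneg (sub_nonneg.2 ht1) h]
      have hane : a ≠ 0 := ne_of_lt ha
      have hval : p + ((-p)/a)*a = 0 := by field_simp; ring
      have hrt : t ≤ (-p)/a := by rw [le_div_iff_of_neg ha]; linarith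
      have hr1 : (-p)/a ≤ 1 := by rw [div_le_iff_of_neg ha]; linarith
      refine ⟨(-p)/a, hrt, hr1, ?_, ?_, ?_⟩
      · rw [hval]
      · rw [hval]; norm_num
      · have := hA ((-p)/a) (ht0.trans hrt) hr1
        have hval2 : (p + ((-p)/a)*a)^2 = 0 := by rw [hval]; norm_num
        linarith
    rcases le_or_gt (p+a) 1 with hp1 | hp1
    · -- take r = 1
      refine ⟨1, ht1, le_refl 1, ?_, ?_, ?_⟩
      · have : p + 1*a = p + a := by ring
        rw [this]; exact hp
      · have : p + 1*a = p + a := by ring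
        rw [this]; exact hp1
      · have e : (q + 1*b)^2 = (q+b)^2 := by ring
        rw [e]
        rcases le_or_gt (p+a) (1/2) with h | h
        · linarith [mul_nonneg (show (0:ℝ) ≤ 1/2 - (p+a) by linarith) (show (0:ℝ) ≤ 1/2 + (p+a) by linarith)]
        · linarith [mul_nonneg (show (0:ℝ) ≤ (p+a) - 1/2 by linarith) (show (0:ℝ) ≤ 3/2 - (p+a) by linarith)]
    · -- p + a > 1 : crossing with P = 1, need a > 0
      have ha : 0 < a := by
        by_contra h; push_neg at h
        linarith [mul_nonneg (sub_nonneg.2 ht1) (neg_nonneg.2 h)]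
      have hane : a ≠ 0 := ne_of_gt ha
      have hval : p + ((1-p)/a)*a = 1 := by field_simp; ring
      have hrt : t ≤ (1-p)/a := by rw [le_div_iff₀ ha]; linarith
      have hr1 : (1-p)/a ≤ 1 := by rw [div_le_iff₀ ha]; linarith
      refine ⟨(1-p)/a, hrt, hr1, ?_, ?_, ?_⟩
      · rw [hval]; norm_num
      · rw [hval]
      · have := hB ((1-p)/a) (ht0.trans hrt) hr1
        have hval2 : (p + ((1-p)/a)*a - 1)^2 = 0 := by rw [hval]; norm_num
        linarith
  obtain ⟨r1, hr10, hr1t, hp10, hp11, hq1⟩ := hex1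
  obtain ⟨r2, htr2, hr21, hp20, hp21, hq2⟩ := hex2
  have hr12 : r1 ≤ r2 := hr1t.trans htr2
  have hcross : ∀ r, r1 ≤ r → r ≤ r2 → q + r*b = 0 → False := by
    intro r hra hrb hq0
    have hr0 : 0 ≤ r := hr10.trans hra
    have hr1' : r ≤ 1 := hrb.trans hr21
    have hPl : 0 ≤ p + r*a ∧ p + r*a ≤ 1 := by
      rcases le_or_gt 0 a with ha0 | ha0
      · constructor
        · linarith [mul_nonneg (sub_nonneg.2 hra) ha0]
        · linarith [mul_nonneg (sub_nonneg.2 hrb) ha0]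
      · constructor
        · linarith [mul_nonneg (sub_nonneg.2 hrb) (neg_nonneg.2 ha0.le)]
        · linarith [mul_nonneg (sub_nonneg.2 hra) (neg_nonneg.2 ha0.le)]
    have h5 := hA r hr0 hr1'
    have h6 := hB r hr0 hr1'
    rw [hq0] at h5 h6
    norm_num at h5 h6
    exact no_cross _ h5 h6 hPl.1 hPl.2
  have hq1ne : q + r1*b ≠ 0 := fun h => hcross r1 le_rfl hr12 h
  have hq2ne : q + r2*b ≠ 0 := fun h => hcross r2 hr12 le_rfl h
  have hQt : 3/4 ≤ (q + t*b)^2 := by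
    rcases hq1ne.lt_or_gt with hs1' | hs1'
    · -- q + r1*b < 0
      have hs2' : q + r2*b < 0 := by
        rcases hq2ne.lt_or_gt with h | h
        · exact h
        · exfalso
          have hb : 0 < b := by
            rcases eq_or_lt_of_le hr12 with he | hlt
            · rw [← he] at h; linarith
            · by_contra hb'; push_neg at hb'
              linarith [mul_nonneg (sub_nonneg.2 hr12) (neg_nonneg.2 hb')]
          have hbne : b ≠ 0 := ne_of_gt hb
          have hval : q + ((-q)/b)*b = 0 := by field_simp; ring
          refine hcross ((-q)/b) ?_ ?_ hval
          · rw [le_div_iff₀ hb]; linarith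
          · rw [div_le_iff₀ hb]; linarith
      have hres := between_sq (-q) (-b) r1 r2 t hr1t htr2
        (by linarith) (by linarith) (by linarith [hq1]) (by linarith [hq2])
      linarith [hres]
    · -- 0 < q + r1*b
      have hs2' : 0 < q + r2*b := by
        rcases hq2ne.lt_or_gt with h | h
        · exfalso
          have hb : b < 0 := by
            rcases eq_or_lt_of_le hr12 with he | hlt
            · rw [← he] at h; linarith
            · by_contra hb'; push_neg at hb'
              linarith [mul_nonneg (sub_nonneg.2 hr12) hb']
          have hbne : b ≠ 0 := ne_of_lt hb
          have hval : q + ((-q)/b)*b = 0 := by field_simp; ring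
          refine hcross ((-q)/b) ?_ ?_ hval
          · rw [le_div_iff_of_neg hb]; linarith
          · rw [div_le_iff_of_neg hb]; linarith
        · exact h
      exact between_sq q b r1 r2 t hr1t htr2 hs1' hs2' hq1 hq2
  linarith [hQt, sq_nonneg (p + t*a - s)]


theorem dist_segments_ge (A B C D : EuclideanSpace ℝ (Fin 2))
    (hAB : dist A B = 1) (hCD : dist C D = 1)
    (hAC : 1 < dist A C) (hAD : 1 < dist A D)
    (hBC : 1 < dist B C) (hBD : 1 < dist B D) :
    ∀ x ∈ segment ℝ A B, ∀ y ∈ segment ℝ C D, Real.sqrt 3 / 2 ≤ dist x y := by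
  have dform : ∀ z w : EuclideanSpace ℝ (Fin 2),
      dist z w = Real.sqrt ((z 0 - w 0)^2 + (z 1 - w 1)^2) := by
    intro z w
    rw [EuclideanSpace.dist_eq, Fin.sum_univ_two]
    congr 1
    simp [Real.dist_eq, sq_abs]
  have sq_of_eq : ∀ z w : EuclideanSpace ℝ (Fin 2), dist z w = 1 →
      (z 0 - w 0)^2 + (z 1 - w 1)^2 = 1 := by
    intro z w h
    have hnn : 0 ≤ (z 0 - w 0)^2 + (z 1 - w 1)^2 := by positivity
    have h2 := Real.sq_sqrt hnn
    rw [← dform, h] at h2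
    linarith [h2]
  have sq_of_lt : ∀ z w : EuclideanSpace ℝ (Fin 2), 1 < dist z w →
      1 < (z 0 - w 0)^2 + (z 1 - w 1)^2 := by
    intro z w h
    have hnn : 0 ≤ (z 0 - w 0)^2 + (z 1 - w 1)^2 := by positivity
    have h2 := Real.sq_sqrt hnn
    rw [← dform] at h2
    nlinarith [h, h2]
  intro x hx y hy
  rw [segment_eq_image'] at hx hy
  obtain ⟨s, ⟨hs0, hs1⟩, rfl⟩ := hx
  obtain ⟨t, ⟨ht0, ht1⟩, rfl⟩ := hy
  have huv := sq_of_eq A B hAB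
  have hvv := sq_of_eq C D hCD
  have hac := sq_of_lt A C hAC
  have had := sq_of_lt A D hAD
  have hbc := sq_of_lt B C hBC
  have hbd := sq_of_lt B D hBD
  set u0 : ℝ := B 0 - A 0 with hu0
  set u1 : ℝ := B 1 - A 1 with hu1
  set p : ℝ := (C 0 - A 0)*u0 + (C 1 - A 1)*u1 with hp
  set q : ℝ := -(C 0 - A 0)*u1 + (C 1 - A 1)*u0 with hq
  set a : ℝ := (D 0 - C 0)*u0 + (D 1 - C 1)*u1 with ha
  set b : ℝ := -(D 0 - C 0)*u1 + (D 1 - C 1)*u0 with hb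
  have hu : u0^2 + u1^2 = 1 := by rw [hu0, hu1]; linear_combination huv
  have hab : a^2 + b^2 = 1 := by
    have e : a^2 + b^2 = ((C 0 - D 0)^2 + (C 1 - D 1)^2) * (u0^2 + u1^2) := by
      rw [ha, hb]; ring
    rw [hu, hvv] at e; linarith [e]
  have h1 : 1 < p^2 + q^2 := by
    have e : p^2 + q^2 = ((A 0 - C 0)^2 + (A 1 - C 1)^2) * (u0^2 + u1^2) := by
      rw [hp, hq]; ring
    rw [hu] at e; linarith [hac, e]
  have h2 : 1 < (p+a)^2 + (q+b)^2 := by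
    have e : (p+a)^2 + (q+b)^2 = ((A 0 - D 0)^2 + (A 1 - D 1)^2) * (u0^2 + u1^2) := by
      rw [hp, hq, ha, hb]; ring
    rw [hu] at e; linarith [had, e]
  have h3 : 1 < (p-1)^2 + q^2 := by
    have e : (p - (u0^2+u1^2))^2 + q^2 = ((B 0 - C 0)^2 + (B 1 - C 1)^2) * (u0^2 + u1^2) := by
      rw [hp, hq, hu0, hu1]; ring
    rw [hu] at e; linarith [hbc, e]
  have h4 : 1 < (p+a-1)^2 + (q+b)^2 := by
    have e : (p + a - (u0^2+u1^2))^2 + (q+b)^2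
        = ((B 0 - D 0)^2 + (B 1 - D 1)^2) * (u0^2 + u1^2) := by
      rw [hp, hq, ha, hb, hu0, hu1]; ring
    rw [hu] at e; linarith [hbd, e]
  have hkey := key p q a b s t hab h1 h2 h3 h4 hs0 hs1 ht0 ht1
  rw [dform]
  simp only [PiLp.add_apply, PiLp.smul_apply, PiLp.sub_apply, smul_eq_mul]
  have hid : (p + t*a - s*(u0^2+u1^2))^2 + (q + t*b)^2
      = ((A 0 + s*(B 0 - A 0) - (C 0 + t*(D 0 - C 0)))^2
        + (A 1 + s*(B 1 - A 1) - (C 1 + t*(D 1 - C 1)))^2) * (u0^2 + u1^2) := by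
    rw [hp, hq, ha, hb, hu0, hu1]; ring
  rw [hu, mul_one, mul_one] at hid
  have h34 : 3/4 ≤ (A 0 + s*(B 0 - A 0) - (C 0 + t*(D 0 - C 0)))^2
        + (A 1 + s*(B 1 - A 1) - (C 1 + t*(D 1 - C 1)))^2 := hkey.trans_eq hid
  have hsq : Real.sqrt 3 / 2 = Real.sqrt (3/4) := by
    rw [show (3:ℝ)/4 = 3 * (1/2)^2 by norm_num, Real.sqrt_mul (by norm_num : (0:ℝ) ≤ 3),
      Real.sqrt_sq (by norm_num : (0:ℝ) ≤ (1:ℝ)/2)]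
    ring
  rw [hsq]
  exact Real.sqrt_le_sqrt (by linarith [h34])
end

section
/- Let A, B, C, D be four points in ℝ² with dist(A,B) = dist(C,D) = 1 and all four pairwise distances dist(A,C), dist(A,D), dist(B,C), dist(B,D) strictly greater than 1. Then the infimum of dist(x,y) over x ∈ [A,B], y ∈ [C,D] is attained at a pair (x,y) with x ∈ {A,B} or y ∈ {C,D}. -/
open Module RealInnerProductSpace

lemma aux_inner_zero {E : Type*} [NormedAddCommGroup E] [InnerProductSpace ℝ E]
    (w u : E) (hu : ‖u‖ = 1) (m : ℝ) (hm : 0 < m)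
    (h : ∀ ε : ℝ, |ε| ≤ m → ‖w‖ ≤ ‖w + ε • u‖) : ⟪w, u⟫ = 0 := by
  by_contra hp
  set p : ℝ := ⟪w, u⟫ with hpdef
  have hp0 : 0 < |p| := abs_pos.mpr hp
  set δ : ℝ := min (m / |p|) 1 with hδ
  have hδ0 : 0 < δ := lt_min (div_pos hm hp0) one_pos
  have hδ1 : δ ≤ 1 := min_le_right _ _
  set ε : ℝ := -p * δ with hε
  have hεm : |ε| ≤ m := by
    rw [hε, abs_mul, abs_neg, abs_of_pos hδ0]
    calc |p| * δ ≤ |p| * (m / |p|) := by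
          have := min_le_left (m / |p|) 1
          nlinarith
    _ = m := by field_simp
  have hkey := h ε hεm
  have hsq : ‖w‖ ^ 2 ≤ ‖w + ε • u‖ ^ 2 := by
    have := norm_nonneg w
    nlinarith
  rw [norm_add_sq_real, inner_smul_right, norm_smul, hu] at hsq
  simp only [mul_one, Real.norm_eq_abs] at hsq
  have habs : |ε| ^ 2 = ε ^ 2 := sq_abs ε
  have hε2 : ε ^ 2 = p^2 * δ^2 := by rw [hε]; ring
  have hεp : ε * p = -(p^2) * δ := by rw [hε]; ring
  have hp2 : 0 < p ^ 2 := by positivity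
  nlinarith

lemma aux_parallel {E : Type*} [NormedAddCommGroup E] [InnerProductSpace ℝ E]
    [FiniteDimensional ℝ E] (hdim : finrank ℝ E = 2)
    (w u v : E) (hw : w ≠ 0) (hu : u ≠ 0)
    (h1 : ⟪w, u⟫ = 0) (h2 : ⟪w, v⟫ = 0) : ∃ c : ℝ, v = c • u := by
  set K := (Submodule.span ℝ {w})ᗮ with hK
  have huK : u ∈ K := Submodule.mem_orthogonal_singleton_iff_inner_right.mpr
    (by rw [real_inner_comm] at h1 ⊢; exact h1)
  have hvK : v ∈ K := Submodule.mem_orthogonal_singleton_iff_inner_right.mpr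
    (by rw [real_inner_comm] at h2 ⊢; exact h2)
  have hfin : finrank ℝ K = 1 := by
    have := Submodule.finrank_add_finrank_orthogonal (Submodule.span ℝ {w})
    rw [finrank_span_singleton hw, hdim] at this
    linarith
  have hle : Submodule.span ℝ {u} ≤ K := by
    rw [Submodule.span_le, Set.singleton_subset_iff]; exact huK
  have heq : Submodule.span ℝ {u} = K :=
    Submodule.eq_of_le_of_finrank_le hle (by rw [hfin, finrank_span_singleton hu])
  have : v ∈ Submodule.span ℝ {u} := heq ▸ hvK
  obtain ⟨c, hc⟩ := Submodule.mem_span_singleton.mp this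
  exact ⟨c, hc.symm⟩

set_option maxHeartbeats 1000000 in
theorem min_dist_attained_at_endpoint (A B C D : EuclideanSpace ℝ (Fin 2))
    (hAB : dist A B = 1) (hCD : dist C D = 1)
    (hAC : 1 < dist A C) (hAD : 1 < dist A D)
    (hBC : 1 < dist B C) (hBD : 1 < dist B D) :
    ∃ x ∈ segment ℝ A B, ∃ y ∈ segment ℝ C D,
      (∀ x' ∈ segment ℝ A B, ∀ y' ∈ segment ℝ C D, dist x y ≤ dist x' y') ∧
      (x = A ∨ x = B ∨ y = C ∨ y = D) := by
  set u := B - A with hu_def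
  set v := D - C with hv_def
  have hu : ‖u‖ = 1 := by rw [hu_def, ← dist_eq_norm, dist_comm]; exact hAB
  have hv : ‖v‖ = 1 := by rw [hv_def, ← dist_eq_norm, dist_comm]; exact hCD
  -- minimizer exists
  have hcompAB : IsCompact (segment ℝ A B) := by
    rw [segment_eq_image' ℝ A B]
    exact isCompact_Icc.image (by continuity)
  have hcompCD : IsCompact (segment ℝ C D) := by
    rw [segment_eq_image' ℝ C D]
    exact isCompact_Icc.image (by continuity)
  obtain ⟨⟨x, y⟩, hmem, hmin⟩ :=
    (hcompAB.prod hcompCD).exists_isMinOn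
      ⟨(A, C), left_mem_segment ℝ A B, left_mem_segment ℝ C D⟩
      (Continuous.continuousOn (continuous_fst.dist continuous_snd) :
        ContinuousOn (fun p : _ × _ => dist p.1 p.2) _)
  obtain ⟨hx, hy⟩ := hmem
  have hmin' : ∀ x' ∈ segment ℝ A B, ∀ y' ∈ segment ℝ C D, dist x y ≤ dist x' y' :=
    fun x' hx' y' hy' => isMinOn_iff.mp hmin (x', y') (Set.mk_mem_prod hx' hy')
  -- segments are disjoint, so x ≠ y
  have hne : x ≠ y := by
    intro h
    have h1 : dist A x + dist x B = dist A B := dist_add_dist_of_mem_segment hx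
    have h2 : dist C x + dist x D = dist C D := dist_add_dist_of_mem_segment (h ▸ hy)
    have t1 := dist_triangle A x C
    have t2 := dist_triangle B x D
    have c1 := dist_comm B x
    have c2 := dist_comm x C
    linarith
  by_cases hxA : x = A
  · exact ⟨x, hx, y, hy, hmin', Or.inl hxA⟩
  by_cases hxB : x = B
  · exact ⟨x, hx, y, hy, hmin', Or.inr (Or.inl hxB)⟩
  by_cases hyC : y = C
  · exact ⟨x, hx, y, hy, hmin', Or.inr (Or.inr (Or.inl hyC))⟩
  by_cases hyD : y = D
  · exact ⟨x, hx, y, hy, hmin', Or.inr (Or.inr (Or.inr hyD))⟩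
  -- interior case: get parameters
  obtain ⟨t, ht, hxt⟩ := (segment_eq_image' ℝ A B ▸ hx : x ∈ _)
  obtain ⟨s, hs, hyt⟩ := (segment_eq_image' ℝ C D ▸ hy : y ∈ _)
  simp only at hxt hyt
  rw [← hu_def] at hxt
  rw [← hv_def] at hyt
  have ht0 : 0 < t := by
    rcases lt_or_eq_of_le ht.1 with h | h
    · exact h
    · exact absurd (by rw [← hxt, ← h]; simp) hxA
  have ht1 : t < 1 := by
    rcases lt_or_eq_of_le ht.2 with h | h
    · exact h
    · refine absurd ?_ hxB
      rw [← hxt, h, one_smul, hu_def]; abel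
  have hs0 : 0 < s := by
    rcases lt_or_eq_of_le hs.1 with h | h
    · exact h
    · exact absurd (by rw [← hyt, ← h]; simp) hyC
  have hs1 : s < 1 := by
    rcases lt_or_eq_of_le hs.2 with h | h
    · exact h
    · refine absurd ?_ hyD
      rw [← hyt, h, one_smul, hv_def]; abel
  set w := x - y with hw_def
  have hwne : w ≠ 0 := sub_ne_zero.mpr hne
  -- first order conditions
  have hiu : ⟪w, u⟫ = 0 := by
    apply aux_inner_zero w u hu (min t (1 - t)) (lt_min ht0 (by linarith))
    intro ε hε
    rw [abs_le] at hε
    have hεt : t + ε ∈ Set.Icc (0:ℝ) 1 := by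
      have m1 := min_le_left t (1 - t)
      have m2 := min_le_right t (1 - t)
      exact ⟨by linarith, by linarith⟩
    have hx' : A + (t + ε) • u ∈ segment ℝ A B := by
      rw [segment_eq_image' ℝ A B]
      exact ⟨t + ε, hεt, by rw [← hu_def]⟩
    have := hmin' _ hx' y hy
    rw [dist_eq_norm, dist_eq_norm] at this
    calc ‖w‖ = ‖x - y‖ := by rw [hw_def]
    _ ≤ ‖(A + (t + ε) • u) - y‖ := this
    _ = ‖w + ε • u‖ := by rw [hw_def, ← hxt]; congr 1; module
  have hiv : ⟪w, v⟫ = 0 := by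
    apply aux_inner_zero w v hv (min s (1 - s)) (lt_min hs0 (by linarith))
    intro ε hε
    rw [abs_le] at hε
    have hεs : s - ε ∈ Set.Icc (0:ℝ) 1 := by
      have m1 := min_le_left s (1 - s)
      have m2 := min_le_right s (1 - s)
      exact ⟨by linarith, by linarith⟩
    have hy' : C + (s - ε) • v ∈ segment ℝ C D := by
      rw [segment_eq_image' ℝ C D]
      exact ⟨s - ε, hεs, by rw [← hv_def]⟩
    have := hmin' x hx _ hy'
    rw [dist_eq_norm, dist_eq_norm] at this
    calc ‖w‖ = ‖x - y‖ := by rw [hw_def]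
    _ ≤ ‖x - (C + (s - ε) • v)‖ := this
    _ = ‖w + ε • v‖ := by rw [hw_def, ← hyt]; congr 1; module
  -- parallelism
  have hune : u ≠ 0 := by intro h; rw [h] at hu; simp at hu
  obtain ⟨c, hc⟩ := aux_parallel finrank_euclideanSpace_fin w u v hwne hune hiu hiv
  have hc1 : c = 1 ∨ c = -1 := by
    have : |c| = 1 := by
      have : ‖v‖ = |c| * ‖u‖ := by rw [hc, norm_smul, Real.norm_eq_abs]
      rw [hu, hv, mul_one] at this
      linarith [this]
    exact (abs_eq (by norm_num)).mp this
  -- key construction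
  have key : ∀ t' s' : ℝ, t' ∈ Set.Icc (0:ℝ) 1 → s' ∈ Set.Icc (0:ℝ) 1 →
      t' - s' * c = t - s * c → (t' = 0 ∨ t' = 1 ∨ s' = 0 ∨ s' = 1) →
      ∃ x ∈ segment ℝ A B, ∃ y ∈ segment ℝ C D,
        (∀ x' ∈ segment ℝ A B, ∀ y' ∈ segment ℝ C D, dist x y ≤ dist x' y') ∧
        (x = A ∨ x = B ∨ y = C ∨ y = D) := by
    intro t' s' ht' hs' hts hend
    refine ⟨A + t' • u, ?_, C + s' • v, ?_, ?_, ?_⟩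
    · rw [segment_eq_image' ℝ A B]; exact ⟨t', ht', by rw [← hu_def]⟩
    · rw [segment_eq_image' ℝ C D]; exact ⟨s', hs', by rw [← hv_def]⟩
    · intro x'' hx'' y'' hy''
      have hdeq : (A + t' • u) - (C + s' • v) = x - y := by
        rw [← hxt, ← hyt, hc]
        have h1 : (t' - s' * c) • u = (t - s * c) • u := by rw [hts]
        have h2 : s' • c • u = (s' * c) • u := smul_smul s' c u
        have h3 : s • c • u = (s * c) • u := smul_smul s c u
        rw [h2, h3]
        have : ∀ a b : ℝ, a - b = t' - s' * c → True := fun _ _ _ => trivial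
        -- (A + t'•u) - (C + (s'*c)•u) = (A + t•u) - (C + (s*c)•u)
        have expand : ∀ (p q : ℝ), (A + p • u) - (C + q • u) = (A - C) + (p - q) • u := by
          intro p q; module
        rw [expand, expand, hts]
      rw [dist_eq_norm, dist_eq_norm, hdeq, ← dist_eq_norm]
      exact hmin' x'' hx'' y'' hy''
    · rcases hend with h | h | h | h
      · left; rw [h]; simp
      · right; left; rw [h, one_smul, hu_def]; abel
      · right; right; left; rw [h]; simp
      · right; right; right; rw [h, one_smul, hv_def]; abel
  rcases hc1 with hc1 | hc1
  · subst hc1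
    by_cases hst : s ≤ t
    · refine key (t - s) 0 ⟨by linarith, by linarith⟩ ⟨le_refl 0, by norm_num⟩ (by ring) (by tauto)
    · refine key 0 (s - t) ⟨le_refl 0, by norm_num⟩ ⟨by linarith, by linarith⟩ (by ring) (by tauto)
  · subst hc1
    by_cases hst : t + s ≤ 1
    · refine key (t + s) 0 ⟨by linarith, hst⟩ ⟨le_refl 0, by norm_num⟩ (by ring) (by tauto)
    · refine key 1 (t + s - 1) ⟨by norm_num, le_refl 1⟩ ⟨by linarith, by linarith⟩ (by ring) (by tauto)
end

section
/- Let A, B, C be points in ℝ² with dist(A,B) = 1, and suppose the angles ∠CAB and ∠CBA are both less than π/2, and dist(A,C) ≥ 1, dist(B,C) ≥ 1. Let D be the orthogonal projection of C onto the line through A and B. Then dist(C,D) ≥ (√3/2)·min(dist(A,C), dist(B,C)). -/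
/-!
The acute base angles put the foot `D` between `A` and `B`, so `AD + DB = AB = 1`. If, say,
`AC ≤ BC`, then by Pythagoras `AD ≤ DB`, hence `AD ≤ 1/2`, and
`CD² = AC² - AD² ≥ AC² - 1/4 ≥ (3/4) AC²` because `AC ≥ 1`.
-/

open EuclideanGeometry RealInnerProductSpace

theorem Real.sqrt_three_div_two_mul_le_of_sq_eq_sq_add_sq {a c x : ℝ} (ha : 1 ≤ a) (hc : 0 ≤ c)
    (hx : 0 ≤ x) (hx_le : x ≤ 1 / 2) (h : a ^ 2 = x ^ 2 + c ^ 2) : √3 / 2 * a ≤ c := by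
  refine (pow_le_pow_iff_left₀ (by positivity) hc two_ne_zero).mp ?_
  have hx2 : x ^ 2 ≤ 1 / 4 := by nlinarith
  calc (√3 / 2 * a) ^ 2 = 3 / 4 * a ^ 2 := by
        rw [mul_pow, div_pow, Real.sq_sqrt zero_le_three]; norm_num
    _ ≤ a ^ 2 - 1 / 4 := by nlinarith
    _ ≤ c ^ 2 := by linarith

theorem Real.sqrt_three_div_two_mul_le_of_le {a b c x y : ℝ} (ha : 1 ≤ a) (hc : 0 ≤ c)
    (hx : 0 ≤ x) (hy : 0 ≤ y) (hxy : x + y = 1) (hax : a ^ 2 = x ^ 2 + c ^ 2)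
    (hby : b ^ 2 = y ^ 2 + c ^ 2) (hab : a ≤ b) : √3 / 2 * a ≤ c := by
  have hxy2 : x ^ 2 ≤ y ^ 2 := by nlinarith [pow_le_pow_left₀ (zero_le_one.trans ha) hab 2]
  have hx_le_y : x ≤ y := (pow_le_pow_iff_left₀ hx hy two_ne_zero).mp hxy2
  exact Real.sqrt_three_div_two_mul_le_of_sq_eq_sq_add_sq ha hc hx (by linarith) hax

theorem Real.sqrt_three_div_two_mul_min_le {a b c x y : ℝ} (ha : 1 ≤ a) (hb : 1 ≤ b) (hc : 0 ≤ c)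
    (hx : 0 ≤ x) (hy : 0 ≤ y) (hxy : x + y = 1) (hax : a ^ 2 = x ^ 2 + c ^ 2)
    (hby : b ^ 2 = y ^ 2 + c ^ 2) : √3 / 2 * min a b ≤ c := by
  rcases le_total a b with hab | hba
  · rw [min_eq_left hab]
    exact Real.sqrt_three_div_two_mul_le_of_le ha hc hx hy hxy hax hby hab
  · rw [min_eq_right hba]
    exact Real.sqrt_three_div_two_mul_le_of_le hb hc hy hx (by linarith) hby hax hba

section InnerProductSpace

variable {V : Type*} [NormedAddCommGroup V] [InnerProductSpace ℝ V]

theorem InnerProductGeometry.inner_pos_of_angle_lt_pi_div_two {x y : V}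
    (h : InnerProductGeometry.angle x y < Real.pi / 2) : 0 < ⟪x, y⟫ := by
  rw [InnerProductGeometry.angle, Real.arccos_lt_pi_div_two] at h
  rcases div_pos_iff.mp h with ⟨hxy, -⟩ | ⟨-, hneg⟩
  · exact hxy
  · exact absurd hneg (not_lt.mpr (by positivity))

theorem dist_sq_eq_dist_sq_add_dist_sq_of_inner_eq_zero {A B C D P : V}
    (hD : D ∈ line[ℝ, A, B]) (hP : P ∈ line[ℝ, A, B]) (hperp : ⟪C - D, B - A⟫ = 0) :
    dist P C ^ 2 = dist P D ^ 2 + dist C D ^ 2 := by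
  have hPD : P - D ∈ vectorSpan ℝ {A, B} := by
    rw [← direction_affineSpan]
    exact AffineSubspace.vsub_mem_direction hP hD
  obtain ⟨r, hr⟩ := mem_vectorSpan_pair.mp hPD
  have hright : ⟪P - D, C - D⟫ = 0 := by
    rw [← hr, vsub_eq_sub, real_inner_smul_left, real_inner_comm, ← neg_sub B A,
      inner_neg_right, hperp, neg_zero, mul_zero]
  have := norm_sub_sq_eq_norm_sq_add_norm_sq_real hright
  rw [sub_sub_sub_cancel_right] at this
  simpa only [dist_eq_norm, sq] using this

theorem wbtw_of_inner_pos {A B C D : V} (hD : D ∈ line[ℝ, A, B]) (hperp : ⟪C - D, B - A⟫ = 0)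
    (hA : 0 < ⟪C - A, B - A⟫) (hB : 0 < ⟪C - B, A - B⟫) : Wbtw ℝ A D B := by
  obtain ⟨t, rfl⟩ := mem_affineSpan_pair_iff_exists_lineMap_eq.mp hD
  set D := AffineMap.lineMap A B t
  have hCA : ⟪C - A, B - A⟫ = t * ‖B - A‖ ^ 2 := by
    calc ⟪C - A, B - A⟫ = ⟪C - D, B - A⟫ + ⟪D - A, B - A⟫ := by
          rw [← inner_add_left, sub_add_sub_cancel]
      _ = t * ‖B - A‖ ^ 2 := by
          rw [hperp, ← vsub_eq_sub D, AffineMap.lineMap_vsub_left, vsub_eq_sub,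
            real_inner_smul_left, real_inner_self_eq_norm_sq, zero_add]
  have hCB : ⟪C - B, A - B⟫ = (1 - t) * ‖A - B‖ ^ 2 := by
    calc ⟪C - B, A - B⟫ = -⟪C - D, B - A⟫ + ⟪D - B, A - B⟫ := by
          rw [← inner_neg_right, neg_sub, ← inner_add_left, sub_add_sub_cancel]
      _ = (1 - t) * ‖A - B‖ ^ 2 := by
          rw [hperp, ← vsub_eq_sub D, AffineMap.lineMap_vsub_right, vsub_eq_sub,
            real_inner_smul_left, real_inner_self_eq_norm_sq, neg_zero, zero_add]
  refine ⟨t, ⟨?_, ?_⟩, rfl⟩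
  · exact (pos_of_mul_pos_left (hCA ▸ hA) (sq_nonneg _)).le
  · linarith [pos_of_mul_pos_left (hCB ▸ hB) (sq_nonneg _)]

end InnerProductSpace

theorem altitude_ge (A B C D : EuclideanSpace ℝ (Fin 2))
    (hAB : dist A B = 1) (hAC : 1 ≤ dist A C) (hBC : 1 ≤ dist B C)
    (hA : EuclideanGeometry.angle C A B < Real.pi / 2)
    (hB : EuclideanGeometry.angle C B A < Real.pi / 2)
    (hD : D ∈ affineSpan ℝ ({A, B} : Set (EuclideanSpace ℝ (Fin 2))))
    (hperp : inner ℝ (C - D) (B - A) = (0 : ℝ)) :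
    Real.sqrt 3 / 2 * min (dist A C) (dist B C) ≤ dist C D := by
  have hA_pyth := dist_sq_eq_dist_sq_add_dist_sq_of_inner_eq_zero hD
    (left_mem_affineSpan_pair ℝ A B) hperp
  have hB_pyth := dist_sq_eq_dist_sq_add_dist_sq_of_inner_eq_zero hD
    (right_mem_affineSpan_pair ℝ A B) hperp
  have hbtw : Wbtw ℝ A D B := wbtw_of_inner_pos hD hperp
    (InnerProductGeometry.inner_pos_of_angle_lt_pi_div_two hA)
    (InnerProductGeometry.inner_pos_of_angle_lt_pi_div_two hB)
  have hsum : dist A D + dist B D = 1 := by rw [dist_comm B D, hbtw.dist_add_dist, hAB]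
  exact Real.sqrt_three_div_two_mul_min_le hAC hBC dist_nonneg dist_nonneg dist_nonneg hsum
    hA_pyth hB_pyth
end
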